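/- For any p ∈ [1, ∞], the function d_p(CL(h), CL(g)) = inf { ‖h' − g'‖_p : h' ∈ CL(h) ∩ hSdiag, g' ∈ CL(g) ∩ hSdiag } is a metric on the quotient hS_*/∼ (i.e., it is nonnegative, symmetric, vanishes exactly when CL(h) = CL(g), and satisfies the triangle inequality). -/

import Mathlib

open scoped BigOperators ENNReal
open Finset

/-- Parameters of the network: `K` vectors in `ℝ^S`. -/
abbrev Params (K S : ℕ) := Fin K → Fin S → ℝ

/-- Order-`K` tensors with all sides of size `S`. -/
abbrev Tensor (K S : ℕ) := (Fin K → Fin S) → ℝ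

/-- The Segre map: `P(h)_{i_1,…,i_K} = h_{1,i_1} ⋯ h_{K,i_K}`. -/
noncomputable def Segre {K S : ℕ} (h : Params K S) : Tensor K S :=
  fun i => ∏ k, h k (i k)

/-- Parameters with all components nonzero. -/
def hSstar (K S : ℕ) : Set (Params K S) := {h | ∀ k, h k ≠ 0}

/-- The rescaling equivalence class of `h` (product of scales equal to `1`). -/
def CL {K S : ℕ} (h : Params K S) : Set (Params K S) :=
  {g | ∃ lam : Fin K → ℝ, (∏ k, lam k) = 1 ∧ ∀ k, g k = lam k • h k}

/-- Sup norm on `ℝ^S`. -/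
noncomputable def supnorm {S : ℕ} (x : Fin S → ℝ) : ℝ := ⨆ i, |x i|

/-- Parameters in `hSstar` whose components all have the same sup norm. -/
def hSdiag (K S : ℕ) : Set (Params K S) :=
  hSstar K S ∩ {h | ∀ k k' : Fin K, supnorm (h k) = supnorm (h k')}

/-- Entrywise `ℓ^p` norm, `p ∈ [1,∞]`. -/
noncomputable def pnorm (p : ℝ≥0∞) {ι : Type*} [Fintype ι] (x : ι → ℝ) : ℝ :=
  if p = ∞ then ⨆ i, |x i| else (∑ i, |x i| ^ p.toReal) ^ (1 / p.toReal)

/-- Flatten parameters into a vector of length `K·S`. -/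
def flat {K S : ℕ} (h : Params K S) : Fin K × Fin S → ℝ := fun ki => h ki.1 ki.2

/-- The distance `d_p` between rescaling classes, via representatives in `hSdiag`. -/
noncomputable def dDist {K S : ℕ} (p : ℝ≥0∞) (h g : Params K S) : ℝ :=
  sInf ((fun pr : Params K S × Params K S => pnorm p (flat pr.1 - flat pr.2)) ''
    {pr | pr.1 ∈ CL h ∩ hSdiag K S ∧ pr.2 ∈ CL g ∩ hSdiag K S})

/-! The diagonal representatives of a class differ only by sign vectors with product `1`:
the rescaling factors between two of them all have the same absolute value, and their
product is `1`. Hence `d_p` is a minimum over a finite nonempty set, it is attained, and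
it vanishes only on representatives that coincide. Multiplying the `k`-th component by a
sign is an isometry of `ℓ^p` that preserves each class and `hSdiag`; it lets one align the
middle representatives of two optimal pairs, which gives the triangle inequality. -/

section pnorm

variable {p : ℝ≥0∞} {ι : Type*} [Fintype ι]

lemma pnorm_eq_norm_toLp (hp : p ≠ 0) (x : ι → ℝ) : pnorm p x = ‖WithLp.toLp p x‖ := by
  rcases eq_or_ne p ∞ with rfl | hne
  · simp [pnorm, PiLp.norm_eq_ciSup, Real.norm_eq_abs]
  · rw [pnorm, if_neg hne, PiLp.norm_eq_sum (ENNReal.toReal_pos hp hne)]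
    simp [Real.norm_eq_abs]

lemma pnorm_congr_abs {x y : ι → ℝ} (h : ∀ i, |x i| = |y i|) : pnorm p x = pnorm p y := by
  unfold pnorm
  simp only [h]

lemma pnorm_sub_comm (x y : ι → ℝ) : pnorm p (x - y) = pnorm p (y - x) :=
  pnorm_congr_abs fun i => abs_sub_comm (x i) (y i)

variable [Fact (1 ≤ p)]

lemma ne_zero_of_fact_one_le : p ≠ 0 :=
  (zero_lt_one.trans_le Fact.out).ne'

lemma pnorm_nonneg (x : ι → ℝ) : 0 ≤ pnorm p x := by
  rw [pnorm_eq_norm_toLp ne_zero_of_fact_one_le]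
  exact norm_nonneg _

lemma pnorm_eq_zero_iff {x : ι → ℝ} : pnorm p x = 0 ↔ x = 0 := by
  rw [pnorm_eq_norm_toLp ne_zero_of_fact_one_le, norm_eq_zero, WithLp.toLp_eq_zero]

lemma pnorm_add_le (x y : ι → ℝ) : pnorm p (x + y) ≤ pnorm p x + pnorm p y := by
  simp only [pnorm_eq_norm_toLp ne_zero_of_fact_one_le, WithLp.toLp_add]
  exact norm_add_le _ _

end pnorm

section supnorm

variable {S : ℕ}

lemma supnorm_eq_norm_toLp (x : Fin S → ℝ) : supnorm x = ‖WithLp.toLp ∞ x‖ := by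
  rw [← pnorm_eq_norm_toLp ENNReal.top_ne_zero]
  simp [supnorm, pnorm]

lemma supnorm_smul (c : ℝ) (x : Fin S → ℝ) : supnorm (c • x) = |c| * supnorm x := by
  rw [supnorm_eq_norm_toLp, supnorm_eq_norm_toLp, WithLp.toLp_smul, norm_smul,
    Real.norm_eq_abs]

lemma supnorm_pos {x : Fin S → ℝ} (hx : x ≠ 0) : 0 < supnorm x := by
  rw [supnorm_eq_norm_toLp, norm_pos_iff, Ne, WithLp.toLp_eq_zero]
  exact hx

end supnorm

lemma flat_injective {K S : ℕ} : Function.Injective (flat : Params K S → Fin K × Fin S → ℝ) :=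
  fun _ _ h => funext fun k => funext fun i => congrFun h (k, i)

section CL

variable {K S : ℕ}

lemma mem_CL_self (h : Params K S) : h ∈ CL h :=
  ⟨fun _ => 1, by simp, fun k => by simp⟩

lemma ne_zero_of_prod_eq_one {lam : Fin K → ℝ} (hl : ∏ k, lam k = 1) (k : Fin K) :
    lam k ≠ 0 :=
  prod_ne_zero_iff.mp (hl ▸ one_ne_zero) k (mem_univ k)

lemma CL_symm {h g : Params K S} (hg : g ∈ CL h) : h ∈ CL g := by
  obtain ⟨lam, hl, he⟩ := hg
  refine ⟨fun k => (lam k)⁻¹, by rw [prod_inv_distrib, hl, inv_one], fun k => ?_⟩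
  rw [he k, smul_smul, inv_mul_cancel₀ (ne_zero_of_prod_eq_one hl k), one_smul]

lemma CL_trans {h g f : Params K S} (hg : g ∈ CL h) (hf : f ∈ CL g) : f ∈ CL h := by
  obtain ⟨lam, hl, hg⟩ := hg
  obtain ⟨mu, hm, hf⟩ := hf
  refine ⟨fun k => mu k * lam k, by rw [prod_mul_distrib, hl, hm, one_mul], fun k => ?_⟩
  rw [hf k, hg k, smul_smul]

lemma CL_eq_of_mem {h g : Params K S} (hg : g ∈ CL h) : CL g = CL h :=
  Set.ext fun _ => ⟨CL_trans hg, CL_trans (CL_symm hg)⟩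

end CL

section hSdiag

variable {K S : ℕ}

lemma nonempty_CL_inter_hSdiag {h : Params K S} (hh : h ∈ hSstar K S) :
    (CL h ∩ hSdiag K S).Nonempty := by
  rcases Nat.eq_zero_or_pos K with rfl | hK
  · exact ⟨h, mem_CL_self h, hh, fun k => k.elim0⟩
  have hpos : ∀ k, 0 < supnorm (h k) := fun k => supnorm_pos (hh k)
  have hprod : 0 < ∏ k, supnorm (h k) := prod_pos fun k _ => hpos k
  set c := (∏ k, supnorm (h k)) ^ ((K : ℝ)⁻¹)
  have hc : 0 < c := Real.rpow_pos_of_pos hprod _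
  have hcK : c ^ K = ∏ k, supnorm (h k) := Real.rpow_inv_natCast_pow hprod.le hK.ne'
  have hlam : ∀ k, 0 < c / supnorm (h k) := fun k => div_pos hc (hpos k)
  refine ⟨fun k => (c / supnorm (h k)) • h k, ⟨fun k => c / supnorm (h k), ?_, fun _ => rfl⟩,
    fun k => smul_ne_zero (hlam k).ne' (hh k), fun k k' => ?_⟩
  · rw [prod_div_distrib, prod_const, card_univ, Fintype.card_fin, hcK, div_self hprod.ne']
  · simp only [supnorm_smul, abs_of_pos (hlam _), div_mul_cancel₀ _ (hpos _).ne']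

lemma abs_eq_one_of_smul_mem_hSdiag {a b : Params K S} (ha : a ∈ hSdiag K S)
    (hb : b ∈ hSdiag K S) {lam : Fin K → ℝ} (hl : ∏ k, lam k = 1)
    (hab : ∀ k, b k = lam k • a k) (k : Fin K) : |lam k| = 1 := by
  set r := supnorm (b k) / supnorm (a k)
  have hr : 0 < r := div_pos (supnorm_pos (hb.1 k)) (supnorm_pos (ha.1 k))
  have habs : ∀ j, |lam j| = r := fun j => by
    rw [eq_div_iff (supnorm_pos (ha.1 k)).ne', ha.2 k j, hb.2 k j, hab j, supnorm_smul]
  have hrK : r ^ K = 1 := calc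
    r ^ K = ∏ j, |lam j| := by simp [habs]
    _ = 1 := by rw [← abs_prod, hl, abs_one]
  rw [habs k, ← pow_eq_one_iff_of_nonneg hr.le (Fin.pos k).ne']
  exact hrK

lemma exists_sign_of_mem_CL_inter_hSdiag {a b : Params K S} (ha : a ∈ hSdiag K S)
    (hb : b ∈ CL a ∩ hSdiag K S) :
    ∃ ν : Fin K → ℝ, ∏ k, ν k = 1 ∧ (∀ k, |ν k| = 1) ∧ ∀ k, b k = ν k • a k := by
  obtain ⟨⟨ν, hν, hab⟩, hb⟩ := hb
  exact ⟨ν, hν, abs_eq_one_of_smul_mem_hSdiag ha hb hν hab, hab⟩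

lemma sign_smul_mem_CL_inter_hSdiag {f a : Params K S} (ha : a ∈ CL f ∩ hSdiag K S)
    {ν : Fin K → ℝ} (hν : ∏ k, ν k = 1) (hν1 : ∀ k, |ν k| = 1) :
    (fun k => ν k • a k) ∈ CL f ∩ hSdiag K S := by
  refine ⟨CL_trans ha.1 ⟨ν, hν, fun _ => rfl⟩,
    fun k => smul_ne_zero (ne_zero_of_prod_eq_one hν k) (ha.2.1 k), fun k k' => ?_⟩
  simp only [supnorm_smul, hν1, one_mul]
  exact ha.2.2 k k'

lemma finite_CL_inter_hSdiag (h : Params K S) : (CL h ∩ hSdiag K S).Finite := by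
  rcases (CL h ∩ hSdiag K S).eq_empty_or_nonempty with he | ⟨a, ha⟩
  · exact he ▸ Set.finite_empty
  refine ((Set.Finite.pi fun _ => Set.toFinite {-1, 1}).image
    fun ν : Fin K → ℝ => fun k => ν k • a k).subset fun b hb => ?_
  have hb' : b ∈ CL a ∩ hSdiag K S := ⟨CL_trans (CL_symm ha.1) hb.1, hb.2⟩
  obtain ⟨ν, -, hν1, hab⟩ := exists_sign_of_mem_CL_inter_hSdiag ha.2 hb'
  refine ⟨ν, fun k _ => ?_, funext fun k => (hab k).symm⟩
  rcases (abs_eq zero_le_one).mp (hν1 k) with h1 | h1 <;> simp [h1]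

end hSdiag

section dDist

variable {K S : ℕ} {p : ℝ≥0∞}

lemma dDist_comm (h g : Params K S) : dDist p h g = dDist p g h := by
  unfold dDist
  congr 1
  ext r
  constructor <;>
  · rintro ⟨⟨a, b⟩, ⟨ha, hb⟩, rfl⟩
    exact ⟨(b, a), ⟨hb, ha⟩, pnorm_sub_comm _ _⟩

lemma exists_pnorm_eq_dDist {h g : Params K S} (hh : h ∈ hSstar K S) (hg : g ∈ hSstar K S) :
    ∃ a ∈ CL h ∩ hSdiag K S, ∃ b ∈ CL g ∩ hSdiag K S,
      pnorm p (flat a - flat b) = dDist p h g := by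
  have hfin := ((finite_CL_inter_hSdiag h).prod (finite_CL_inter_hSdiag g)).image
    fun pr : Params K S × Params K S => pnorm p (flat pr.1 - flat pr.2)
  have hne := ((nonempty_CL_inter_hSdiag hh).prod (nonempty_CL_inter_hSdiag hg)).image
    fun pr : Params K S × Params K S => pnorm p (flat pr.1 - flat pr.2)
  obtain ⟨⟨a, b⟩, ⟨ha, hb⟩, hab⟩ := hne.csInf_mem hfin
  exact ⟨a, ha, b, hb, hab⟩

variable [Fact (1 ≤ p)]

lemma dDist_nonneg (h g : Params K S) : 0 ≤ dDist p h g :=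
  Real.sInf_nonneg <| by
    rintro _ ⟨_, -, rfl⟩
    exact pnorm_nonneg _

lemma dDist_le {h g a b : Params K S} (ha : a ∈ CL h ∩ hSdiag K S)
    (hb : b ∈ CL g ∩ hSdiag K S) : dDist p h g ≤ pnorm p (flat a - flat b) :=
  csInf_le ⟨0, by rintro _ ⟨_, -, rfl⟩; exact pnorm_nonneg _⟩ ⟨(a, b), ⟨ha, hb⟩, rfl⟩

lemma dDist_eq_zero_iff {h g : Params K S} (hh : h ∈ hSstar K S) (hg : g ∈ hSstar K S) :
    dDist p h g = 0 ↔ CL h = CL g := by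
  constructor
  · intro h0
    obtain ⟨a, ha, b, hb, hab⟩ := exists_pnorm_eq_dDist (p := p) hh hg
    rw [h0, pnorm_eq_zero_iff, sub_eq_zero] at hab
    rw [← CL_eq_of_mem ha.1, flat_injective hab, CL_eq_of_mem hb.1]
  · intro hCL
    obtain ⟨a, ha⟩ := nonempty_CL_inter_hSdiag hh
    exact le_antisymm ((dDist_le ha ⟨hCL ▸ ha.1, ha.2⟩).trans_eq
      (pnorm_eq_zero_iff.mpr (sub_self _))) (dDist_nonneg h g)

lemma dDist_triangle {h g f : Params K S} (hh : h ∈ hSstar K S) (hg : g ∈ hSstar K S)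
    (hf : f ∈ hSstar K S) : dDist p h f ≤ dDist p h g + dDist p g f := by
  obtain ⟨h₁, hh₁, g₁, hg₁, hhg⟩ := exists_pnorm_eq_dDist (p := p) hh hg
  obtain ⟨g₂, hg₂, f₂, hf₂, hgf⟩ := exists_pnorm_eq_dDist (p := p) hg hf
  obtain ⟨ν, hν, hν1, hg₁₂⟩ := exists_sign_of_mem_CL_inter_hSdiag hg₂.2
    ⟨(CL_eq_of_mem hg₂.1).symm ▸ hg₁.1, hg₁.2⟩
  set f₁ : Params K S := fun k => ν k • f₂ k
  have hf₁ : f₁ ∈ CL f ∩ hSdiag K S := sign_smul_mem_CL_inter_hSdiag hf₂ hν hν1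
  have hsign : pnorm p (flat g₁ - flat f₁) = pnorm p (flat g₂ - flat f₂) :=
    pnorm_congr_abs fun _ => by
      simp [f₁, flat, hg₁₂, ← mul_sub, abs_mul, hν1]
  calc dDist p h f ≤ pnorm p (flat h₁ - flat f₁) := dDist_le hh₁ hf₁
    _ = pnorm p ((flat h₁ - flat g₁) + (flat g₁ - flat f₁)) := by rw [sub_add_sub_cancel]
    _ ≤ pnorm p (flat h₁ - flat g₁) + pnorm p (flat g₁ - flat f₁) := pnorm_add_le _ _
    _ = dDist p h g + dDist p g f := by rw [hhg, hsign, hgf]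

end dDist

theorem dDist_is_metric_general {K S : ℕ}
    (p : ℝ≥0∞) (hp : 1 ≤ p) :
    (∀ h ∈ hSstar K S, ∀ g ∈ hSstar K S, 0 ≤ dDist p h g) ∧
    (∀ h ∈ hSstar K S, ∀ g ∈ hSstar K S, dDist p h g = dDist p g h) ∧
    (∀ h ∈ hSstar K S, ∀ g ∈ hSstar K S, (dDist p h g = 0 ↔ CL h = CL g)) ∧
    (∀ h ∈ hSstar K S, ∀ g ∈ hSstar K S, ∀ f ∈ hSstar K S,
      dDist p h f ≤ dDist p h g + dDist p g f) := by
  have : Fact (1 ≤ p) := ⟨hp⟩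
  exact ⟨fun h _ g _ => dDist_nonneg h g, fun h _ g _ => dDist_comm h g,
    fun _ hh _ hg => dDist_eq_zero_iff hh hg,
    fun _ hh _ hg _ hf => dDist_triangle hh hg hf⟩

/-- for every `p ∈ [1,∞]`, `d_p` is a metric on `hS_*/∼`:
nonnegative, symmetric, vanishing exactly when the classes agree, and
satisfying the triangle inequality. -/
theorem dDist_is_metric {K S : ℕ} (hK : 1 ≤ K) (hS : 2 ≤ S)
    (p : ℝ≥0∞) (hp : 1 ≤ p) :
    (∀ h ∈ hSstar K S, ∀ g ∈ hSstar K S, 0 ≤ dDist p h g) ∧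
    (∀ h ∈ hSstar K S, ∀ g ∈ hSstar K S, dDist p h g = dDist p g h) ∧
    (∀ h ∈ hSstar K S, ∀ g ∈ hSstar K S, (dDist p h g = 0 ↔ CL h = CL g)) ∧
    (∀ h ∈ hSstar K S, ∀ g ∈ hSstar K S, ∀ f ∈ hSstar K S,
      dDist p h f ≤ dDist p h g + dDist p g f) :=
  dDist_is_metric_general p hp
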